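/- arXiv:1302.0357 — 6 statements merged into one kernel-verified Lean document; each statement's English description precedes it below -/
import Mathlib

section
/- If n is a positive integer congruent to 2 modulo 4, then the sum of the first n Fibonacci numbers, F_0 + F_1 + ... + F_{n-1}, equals L_{n/2} · F_{n/2 + 1}. -/
/-!
The sum `F_0 + ⋯ + F_{n-1}` is `F_{n+1} - 1`. On the other side, `L_k = F_{k-1} + F_{k+1}`, so
Cassini's identity `F_{k-1} F_{k+1} = F_k^2 + (-1)^k` together with `F_{2k+1} = F_k^2 + F_{k+1}^2`
gives `L_k F_{k+1} = F_{2k+1} + (-1)^k`. For `n = 2k` with `k` odd both sides equal `F_{n+1} - 1`.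
-/

section LucasRecurrence

variable {L : ℕ → ℕ} (hL0 : L 0 = 2) (hL1 : L 1 = 1) (hL : ∀ n, L (n + 2) = L (n + 1) + L n)
include hL0 hL1 hL

-- Over `ℤ` the formula also holds at `m = 0`, since `Int.fib (-1) = 1`.
theorem lucas_eq_fib_sub_one_add_fib_add_one (m : ℕ) :
    (L m : ℤ) = Int.fib (m - 1) + Int.fib (m + 1) := by
  induction m using Nat.twoStepInduction with
  | zero => simp [hL0]
  | one => simp [hL1]
  | more k ih₀ ih₁ =>
    push_cast [hL, ih₀, ih₁]
    grind [Int.fib_add_two]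

theorem lucas_mul_fib_add_one (k : ℕ) :
    (L k * Nat.fib (k + 1) : ℤ) = Nat.fib (2 * k + 1) + (-1) ^ k := by
  have cassini := Int.fib_succ_mul_fib_pred_sub_fib_sq k
  have doubling := Int.fib_two_mul_add_one k
  rw [lucas_eq_fib_sub_one_add_fib_add_one hL0 hL1 hL, ← Int.fib_natCast, ← Int.fib_natCast]
  push_cast
  rw [doubling]
  simp only [Int.natAbs_natCast] at cassini
  linear_combination cassini

end LucasRecurrence

theorem sum_fib_eq_lucas_mul_fib_general (L : ℕ → ℕ) (hL0 : L 0 = 2) (hL1 : L 1 = 1)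
    (hL : ∀ n, L (n + 2) = L (n + 1) + L n) (n : ℕ) (hn4 : n % 4 = 2) :
    (∑ k ∈ Finset.range n, Nat.fib k) = L (n / 2) * Nat.fib (n / 2 + 1) := by
  obtain ⟨k, rfl, hk⟩ : ∃ k, n = 2 * k ∧ Odd k := ⟨n / 2, by omega, Nat.odd_iff.mpr (by omega)⟩
  have hsum := Nat.fib_succ_eq_succ_sum (2 * k)
  have hprod := lucas_mul_fib_add_one hL0 hL1 hL k
  rw [hk.neg_one_pow] at hprod
  rw [Nat.mul_div_cancel_left k two_pos]
  omega

theorem sum_fib_eq_lucas_mul_fib (L : ℕ → ℕ) (hL0 : L 0 = 2) (hL1 : L 1 = 1)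
    (hL : ∀ n, L (n + 2) = L (n + 1) + L n) (n : ℕ) (hn : 0 < n) (hn4 : n % 4 = 2) :
    (∑ k ∈ Finset.range n, Nat.fib k) = L (n / 2) * Nat.fib (n / 2 + 1) :=
  sum_fib_eq_lucas_mul_fib_general L hL0 hL1 hL n hn4
end

section
/- If n is a positive integer congruent to 2 modulo 4 and r is any natural number, then F_r + F_{r+1} + ... + F_{r+n-1} = L_{n/2} · F_{r + n/2 + 1}. -/
/-!
Telescoping the recurrence gives `∑_{k<2m} F_{r+k} = F_{r+2m+1} - F_{r+1}`. Any sequence `G`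
satisfying the Fibonacci recurrence obeys `G (k + 2m) + (-1)^m G k = L_m G (k + m)`; for odd
`m = n/2`, `G = F` and `k = r + 1` the right-hand side becomes `L_m F_{r+m+1}`.
-/

theorem sum_range_add_eq_of_fib_recurrence {M : Type*} [AddCommMonoid M] {G : ℕ → M}
    (hG : ∀ k, G (k + 2) = G k + G (k + 1)) (N : ℕ) :
    ∑ k ∈ Finset.range N, G k + G 1 = G (N + 1) := by
  induction N with
  | zero => simp
  | succ N ih => rw [Finset.sum_range_succ, add_right_comm, ih, add_comm, ← hG]

theorem add_neg_one_pow_mul_eq_lucas_mul {R : Type*} [CommRing R] {G L : ℕ → R}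
    (hG : ∀ k, G (k + 2) = G k + G (k + 1))
    (hL0 : L 0 = 2) (hL1 : L 1 = 1) (hL : ∀ m, L (m + 2) = L (m + 1) + L m) (m : ℕ) :
    ∀ k, G (k + 2 * m) + (-1) ^ m * G k = L m * G (k + m) := by
  induction m using Nat.twoStepInduction with
  | zero => intro k; simp [hL0, two_mul]
  | one => intro k; simp [hL1, hG]
  | more m ih ih' =>
    intro k
    have h₀ := ih (k + 2)
    have h₁ := ih' (k + 1)
    rw [show k + 2 + 2 * m = k + 2 * m + 2 by ring, show k + 2 + m = k + m + 2 by ring] at h₀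
    rw [show k + 1 + 2 * (m + 1) = k + 2 * m + 3 by ring,
      show k + 1 + (m + 1) = k + m + 2 by ring] at h₁
    rw [show k + 2 * (m + 2) = k + 2 * m + 2 + 2 by ring, show k + (m + 2) = k + m + 2 by ring,
      hG, hL, add_mul, ← h₀, ← h₁, hG k, hG (k + 2 * m + 1)]
    ring

theorem sum_fib_shifted_general (L : ℕ → ℕ) (hL0 : L 0 = 2) (hL1 : L 1 = 1)
    (hL : ∀ n, L (n + 2) = L (n + 1) + L n)
    (n : ℕ) (hn4 : n % 4 = 2) (r : ℕ) :
    (∑ k ∈ Finset.range n, Nat.fib (r + k)) = L (n / 2) * Nat.fib (r + n / 2 + 1) := by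
  set m := n / 2
  have hn : n = 2 * m := by omega
  have hm : Odd m := ⟨n / 4, by omega⟩
  have hfib (a : ℕ) : ∀ k, Nat.fib (a + (k + 2)) = Nat.fib (a + k) + Nat.fib (a + (k + 1)) :=
    fun k => Nat.fib_add_two
  have hsum := sum_range_add_eq_of_fib_recurrence (G := fun k => Nat.fib (r + k)) (hfib r) n
  rw [hn, ← add_assoc] at hsum
  have hlucas := add_neg_one_pow_mul_eq_lucas_mul (G := fun k => (Nat.fib (r + 1 + k) : ℤ))
    (L := fun k => (L k : ℤ)) (fun k => by exact_mod_cast hfib (r + 1) k)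
    (by simp [hL0]) (by simp [hL1]) (fun k => by simp [hL]) m 0
  simp only [hm.neg_one_pow, zero_add, add_zero, add_right_comm r 1] at hlucas
  have hodd : Nat.fib (r + 2 * m + 1) = L m * Nat.fib (r + m + 1) + Nat.fib (r + 1) := by
    zify
    linear_combination hlucas
  rw [hn]
  omega

theorem sum_fib_shifted (L : ℕ → ℕ) (hL0 : L 0 = 2) (hL1 : L 1 = 1)
    (hL : ∀ n, L (n + 2) = L (n + 1) + L n)
    (n : ℕ) (hn : 0 < n) (hn4 : n % 4 = 2) (r : ℕ) :
    (∑ k ∈ Finset.range n, Nat.fib (r + k)) = L (n / 2) * Nat.fib (r + n / 2 + 1) :=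
  sum_fib_shifted_general L hL0 hL1 hL n hn4 r
end

section
/- Let (x_n) be any sequence of complex numbers satisfying x_{n+2} = x_{n+1} + x_n. If n is a positive integer congruent to 2 modulo 4, then x_0 + x_1 + ... + x_{n-1} = L_{n/2} · x_{n/2 + 1}, where L denotes the Lucas numbers. -/
/-! For a sequence with `x (k + 2) = x (k + 1) + x k` the partial sums telescope,
`∑ k < n, x k = x (n + 1) - x 1`, while the Lucas numbers satisfy
`L m * x (k + m) = x (k + 2 m) + (-1)^m x k`. For `n = 2 m` with `m` odd, taking `k = 1`
turns the second identity into the first. -/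

section FibonacciRecurrence

variable {R : Type*} (x : ℕ → R)

theorem sum_range_eq_sub_of_fib_rec [AddCommGroup R] (hx : ∀ n, x (n + 2) = x (n + 1) + x n)
    (n : ℕ) : ∑ k ∈ Finset.range n, x k = x (n + 1) - x 1 := by
  induction n with
  | zero => simp
  | succ n ih => rw [Finset.sum_range_succ, ih, hx]; abel

theorem lucas_mul_eq_add_neg_one_pow_mul [CommRing R] (L : ℕ → ℕ) (hL0 : L 0 = 2)
    (hL1 : L 1 = 1) (hL : ∀ n, L (n + 2) = L (n + 1) + L n)
    (hx : ∀ n, x (n + 2) = x (n + 1) + x n) (m : ℕ) :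
    ∀ k, (L m : R) * x (k + m) = x (k + 2 * m) + (-1) ^ m * x k := by
  induction m using Nat.twoStepInduction with
  | zero => intro k; simp [hL0]; ring
  | one => intro k; simp [hL1, hx]
  | more m ih ih₁ =>
    intro k
    have h₁ : (L (m + 1) : R) * x (k + (m + 2)) = x (k + 2 * m + 3) - (-1) ^ m * x (k + 1) := by
      rw [show k + (m + 2) = k + 1 + (m + 1) by ring, ih₁]; ring_nf
    have h₀ : (L m : R) * x (k + (m + 2)) = x (k + 2 * m + 2) + (-1) ^ m * x (k + 2) := by
      rw [show k + (m + 2) = k + 2 + m by ring, ih]; ring_nf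
    rw [hL, show k + 2 * (m + 2) = k + 2 * m + 2 + 2 by ring, hx]
    push_cast
    linear_combination h₁ + h₀ + (-1) ^ m * hx k

end FibonacciRecurrence

theorem sum_general_fib_general (L : ℕ → ℕ) (hL0 : L 0 = 2) (hL1 : L 1 = 1)
    (hL : ∀ n, L (n + 2) = L (n + 1) + L n)
    (x : ℕ → ℂ) (hx : ∀ n, x (n + 2) = x (n + 1) + x n)
    (n : ℕ) (hn4 : n % 4 = 2) :
    (∑ k ∈ Finset.range n, x k) = (L (n / 2) : ℂ) * x (n / 2 + 1) := by
  obtain ⟨m, rfl, hm⟩ : ∃ m, n = 2 * m ∧ Odd m := ⟨n / 2, by omega, by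
    rw [Nat.odd_iff]; omega⟩
  rw [sum_range_eq_sub_of_fib_rec x hx, Nat.mul_div_cancel_left m two_pos, add_comm m 1,
    lucas_mul_eq_add_neg_one_pow_mul x L hL0 hL1 hL hx, hm.neg_one_pow, add_comm 1]
  ring

theorem sum_general_fib (L : ℕ → ℕ) (hL0 : L 0 = 2) (hL1 : L 1 = 1)
    (hL : ∀ n, L (n + 2) = L (n + 1) + L n)
    (x : ℕ → ℂ) (hx : ∀ n, x (n + 2) = x (n + 1) + x n)
    (n : ℕ) (hn : 0 < n) (hn4 : n % 4 = 2) :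
    (∑ k ∈ Finset.range n, x k) = (L (n / 2) : ℂ) * x (n / 2 + 1) :=
  sum_general_fib_general L hL0 hL1 hL x hx n hn4
end

section
/- Let a ∈ ℂ and let (x_n) satisfy x_{n+2} = a·x_{n+1} − x_n, and let (u_n) satisfy the same recurrence with u_0 = 0, u_1 = 1. Then for every odd positive integer n, x_0 + x_1 + ... + x_{n-1} = (u_{(n+1)/2} + u_{(n-1)/2}) · x_{(n-1)/2}. -/
/-! Every solution of `x (n + 2) = a * x (n + 1) - x n` is a combination of two consecutive
terms with the fundamental solution `u` as coefficients: `x (m + k + 1) = u (k + 1) * x (m + 1) - u k * x m`.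
Applied to `x (2m + 1)` and `x (2m + 2)`, this makes the symmetric sums `x 0 + ⋯ + x (2m)` telescope
to `(u (m + 1) + u m) * x m` by induction on `m`. -/

namespace LinearRecurrence

variable {R : Type*} [CommRing R] {a : R} {x u : ℕ → R}

theorem apply_add_add_one (hx : ∀ n, x (n + 2) = a * x (n + 1) - x n)
    (hu0 : u 0 = 0) (hu1 : u 1 = 1) (hu : ∀ n, u (n + 2) = a * u (n + 1) - u n) (k m : ℕ) :
    x (m + k + 1) = u (k + 1) * x (m + 1) - u k * x m := by
  induction k generalizing m with
  | zero => simp [hu0, hu1]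
  | succ k ih =>
    calc x (m + (k + 1) + 1) = x (m + 1 + k + 1) := by rw [Nat.add_right_comm m 1 k, Nat.add_assoc m k 1]
      _ = u (k + 1) * x (m + 2) - u k * x (m + 1) := ih (m + 1)
      _ = u (k + 2) * x (m + 1) - u (k + 1) * x m := by rw [hx, hu]; ring

theorem sum_range_two_mul_add_one (hx : ∀ n, x (n + 2) = a * x (n + 1) - x n)
    (hu0 : u 0 = 0) (hu1 : u 1 = 1) (hu : ∀ n, u (n + 2) = a * u (n + 1) - u n) (m : ℕ) :
    ∑ k ∈ Finset.range (2 * m + 1), x k = (u (m + 1) + u m) * x m := by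
  induction m with
  | zero => simp [hu0, hu1]
  | succ m ih =>
    have hodd : x (2 * m + 1) = u (m + 1) * x (m + 1) - u m * x m := by
      rw [two_mul]; exact apply_add_add_one hx hu0 hu1 hu m m
    have heven : x (2 * m + 2) = u (m + 2) * x (m + 1) - u (m + 1) * x m := by
      rw [show 2 * m + 2 = m + (m + 1) + 1 by omega]; exact apply_add_add_one hx hu0 hu1 hu (m + 1) m
    rw [show 2 * (m + 1) + 1 = 2 * m + 1 + 1 + 1 by omega, Finset.sum_range_succ,
      Finset.sum_range_succ, ih, hodd, heven, hu]
    ring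

end LinearRecurrence

theorem sum_chebyshev_like_general (a : ℂ) (x u : ℕ → ℂ)
    (hx : ∀ n, x (n + 2) = a * x (n + 1) - x n)
    (hu0 : u 0 = 0) (hu1 : u 1 = 1)
    (hu : ∀ n, u (n + 2) = a * u (n + 1) - u n)
    (n : ℕ) (hodd : Odd n) :
    (∑ k ∈ Finset.range n, x k) = (u ((n + 1) / 2) + u ((n - 1) / 2)) * x ((n - 1) / 2) := by
  obtain ⟨m, rfl⟩ := hodd
  rw [show (2 * m + 1 + 1) / 2 = m + 1 by omega, show (2 * m + 1 - 1) / 2 = m by omega]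
  exact LinearRecurrence.sum_range_two_mul_add_one hx hu0 hu1 hu m

theorem sum_chebyshev_like (a : ℂ) (x u : ℕ → ℂ)
    (hx : ∀ n, x (n + 2) = a * x (n + 1) - x n)
    (hu0 : u 0 = 0) (hu1 : u 1 = 1)
    (hu : ∀ n, u (n + 2) = a * u (n + 1) - u n)
    (n : ℕ) (hn : 0 < n) (hodd : Odd n) :
    (∑ k ∈ Finset.range n, x k) = (u ((n + 1) / 2) + u ((n - 1) / 2)) * x ((n - 1) / 2) :=
  sum_chebyshev_like_general a x u hx hu0 hu1 hu n hodd
end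

section
/- For all integers i, j with 0 ≤ i ≤ j, Σ_{k=i}^{j} (−1)^{j+k} · (2k/(k+i)) · C(k+i, 2i) · C(2j, k+j) equals 1 if i = j and 0 otherwise, with the convention 2k/(k+i) = 1 when i = k = 0. -/
/-!
Let `f x = C(x + i, 2i) + C(x + i - 1, 2i)`, a polynomial in `x` of degree `2i` with leading
coefficient `2 / (2i)!`. It is even, vanishes for `|x| < i`, and `f k = (2k/(k+i)) C(k+i, 2i)` for
`k ≥ 1`, while `f 0` is twice the `k = 0` coefficient of the sum. Hence the `2j`-th forward
difference of `f` at `-j`, namely `∑ₘ (-1)ᵐ C(2j, m) f (m - j)`, folds into twice the sum in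
question; since `f` has degree `2i ≤ 2j`, that difference is `2` if `i = j` and `0` otherwise.
-/

open Finset fwdDiff

section BinomialRing

variable {R : Type*} [NonAssocRing R] [Pow R ℕ] [NatPowAssoc R] [BinomialRing R]

lemma fwdDiff_ringChoose (k : ℕ) :
    Δ_[1] (fun r : R ↦ Ring.choose r (k + 1)) = fun r ↦ Ring.choose r k := by
  ext r
  simp only [fwdDiff, Ring.choose_succ_succ, add_sub_cancel_right]

lemma fwdDiff_iter_ringChoose (n m : ℕ) :
    (Δ_[1])^[n] (fun r : R ↦ Ring.choose r (n + m)) = fun r ↦ Ring.choose r m := by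
  induction n generalizing m with
  | zero => simp
  | succ n ih =>
    rw [Function.iterate_succ_apply, add_right_comm, fwdDiff_ringChoose, ih]

lemma fwdDiff_iter_ringChoose_self (n : ℕ) :
    (Δ_[1])^[n] (fun r : R ↦ Ring.choose r n) = fun _ ↦ 1 := by
  simpa [Ring.choose_zero_right] using fwdDiff_iter_ringChoose (R := R) n 0

lemma fwdDiff_iter_ringChoose_of_lt {m n : ℕ} (h : m < n) :
    (Δ_[1])^[n] (fun r : R ↦ Ring.choose r m) = 0 := by
  obtain ⟨k, rfl⟩ := Nat.exists_eq_add_of_lt h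
  rw [show m + k + 1 = k + 1 + m by ring, Function.iterate_add_apply, Function.iterate_succ_apply,
    fwdDiff_iter_ringChoose_self, fwdDiff_const]
  exact Function.iterate_fixed (fwdDiff_const _ _) k

end BinomialRing

lemma sum_range_two_mul_add_one_of_palindrome {M : Type*} [AddCommMonoid M] (g : ℕ → M) (n : ℕ)
    (hg : ∀ m ≤ 2 * n, g (2 * n - m) = g m) :
    ∑ m ∈ range (2 * n + 1), g m = g n + 2 • ∑ k ∈ range n, g (n + 1 + k) := by
  have hlow : ∑ m ∈ range n, g m = ∑ k ∈ range n, g (n + 1 + k) := by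
    rw [← sum_range_reflect]
    refine sum_congr rfl fun k hk ↦ ?_
    rw [← hg _ (by omega)]
    congr 1
    have := mem_range.1 hk
    omega
  rw [two_mul, add_assoc, sum_range_add, sum_range_succ', hlow, two_nsmul]
  simp only [add_zero, add_comm, add_left_comm]

def evenBinom (i : ℕ) (x : ℤ) : ℤ :=
  Ring.choose (x + i) (2 * i) + Ring.choose (x + i - 1) (2 * i)

lemma evenBinom_neg (i : ℕ) (x : ℤ) : evenBinom i (-x) = evenBinom i x := by
  have hsign : Int.negOnePow (2 * i : ℕ) = 1 := by
    rw [Nat.cast_mul, Nat.cast_ofNat, Int.negOnePow_two_mul]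
  rw [evenBinom, evenBinom, show -x + i - 1 = -(x - i + 1) by ring, show -x + i = -(x - i) by ring,
    Ring.choose_neg, Ring.choose_neg, hsign, one_smul, one_smul, add_comm]
  congr 2 <;> push_cast <;> ring

lemma ringChoose_eq_zero_of_lt {x : ℤ} {n : ℕ} (h₀ : 0 ≤ x) (h : x < n) : Ring.choose x n = 0 := by
  lift x to ℕ using h₀
  rw [Ring.choose_natCast, Nat.choose_eq_zero_of_lt (by exact_mod_cast h), Nat.cast_zero]

lemma evenBinom_eq_zero {i : ℕ} {x : ℤ} (h₁ : -i < x) (h₂ : x < i) : evenBinom i x = 0 := by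
  rw [evenBinom, ringChoose_eq_zero_of_lt (by omega) (by push_cast; omega),
    ringChoose_eq_zero_of_lt (by omega) (by push_cast; omega), add_zero]

lemma evenBinom_zero (i : ℕ) : evenBinom i 0 = if i = 0 then 2 else 0 := by
  split_ifs with hi
  · simp [evenBinom, hi]
  · exact evenBinom_eq_zero (by omega) (by omega)

lemma evenBinom_natCast (i : ℕ) {k : ℕ} (hk : 0 < k) :
    (evenBinom i k : ℚ) = 2 * k / (k + i) * (k + i).choose (2 * i) := by
  rcases lt_or_ge k i with hki | hik
  · rw [evenBinom_eq_zero (by omega) (by omega), Nat.choose_eq_zero_of_lt (by omega)]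
    simp
  obtain ⟨n, hn⟩ : ∃ n, k + i = n + 1 := ⟨k + i - 1, by omega⟩
  have hchoose : (n.choose (2 * i) : ℚ) * (k + i) = (k + i).choose (2 * i) * (k - i) := by
    have := Nat.choose_mul_succ_eq n (2 * i)
    rw [← hn, show k + i - 2 * i = k - i by omega] at this
    exact_mod_cast this
  have hpos : (k + i : ℚ) ≠ 0 := by positivity
  rw [evenBinom, show (k : ℤ) + i - 1 = n by omega, show (k : ℤ) + i = (k + i : ℕ) by push_cast; rfl,
    Ring.choose_natCast, Ring.choose_natCast]
  push_cast
  field_simp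
  linear_combination hchoose

lemma fwdDiff_iter_evenBinom {i j : ℕ} (hij : i ≤ j) (x : ℤ) :
    (Δ_[1])^[2 * j] (evenBinom i) x = if i = j then 2 else 0 := by
  have hsplit : evenBinom i = (fun x ↦ Ring.choose (x + (i : ℤ)) (2 * i)) +
      fun x ↦ Ring.choose (x + ((i : ℤ) - 1)) (2 * i) := by
    ext x; simp only [evenBinom, Pi.add_apply, add_sub_assoc]
  rw [hsplit, fwdDiff_iter_add, Pi.add_apply, fwdDiff_iter_comp_add _ fun r ↦ Ring.choose r (2 * i),
    fwdDiff_iter_comp_add _ fun r ↦ Ring.choose r (2 * i)]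
  split_ifs with h
  · subst h
    rw [fwdDiff_iter_ringChoose_self]
    norm_num
  · rw [fwdDiff_iter_ringChoose_of_lt (by omega)]
    simp

def fwdDiffTerm (i j m : ℕ) : ℤ := (-1) ^ m * (2 * j).choose m * evenBinom i (m - j)

lemma sum_fwdDiffTerm {i j : ℕ} (hij : i ≤ j) :
    ∑ m ∈ range (2 * j + 1), fwdDiffTerm i j m = if i = j then 2 else 0 := by
  rw [← fwdDiff_iter_evenBinom hij (-j), fwdDiff_iter_eq_sum_shift]
  refine sum_congr rfl fun m hm ↦ ?_
  have hsign : (-1 : ℤ) ^ (2 * j - m) = (-1) ^ m :=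
    neg_one_pow_congr (by simp [Nat.even_sub (mem_range_succ_iff.1 hm), parity_simps])
  rw [fwdDiffTerm, hsign, smul_eq_mul, nsmul_one, neg_add_eq_sub]

lemma fwdDiffTerm_reflect (i : ℕ) {j m : ℕ} (hm : m ≤ 2 * j) :
    fwdDiffTerm i j (2 * j - m) = fwdDiffTerm i j m := by
  have hsign : (-1 : ℤ) ^ (2 * j - m) = (-1) ^ m :=
    neg_one_pow_congr (by simp [Nat.even_sub hm, parity_simps])
  rw [fwdDiffTerm, fwdDiffTerm, hsign, Nat.choose_symm hm, ← evenBinom_neg]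
  congr 2
  push_cast [hm]
  ring

def inverseMatrixTerm (i j k : ℕ) : ℚ :=
  (-1 : ℚ) ^ (j + k) * (if k + i = 0 then 1 else (2 * k : ℚ) / (k + i)) *
    Nat.choose (k + i) (2 * i) * Nat.choose (2 * j) (k + j)

lemma sum_Icc_inverseMatrixTerm (i j : ℕ) :
    ∑ k ∈ Icc i j, inverseMatrixTerm i j k =
      inverseMatrixTerm i j 0 + ∑ k ∈ range j, inverseMatrixTerm i j (k + 1) := by
  rw [add_comm, ← sum_range_succ']
  refine sum_subset (fun k hk ↦ by simp at hk ⊢; omega) fun k hk hk' ↦ ?_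
  have hki : k + i < 2 * i := by simp at hk hk'; omega
  simp [inverseMatrixTerm, Nat.choose_eq_zero_of_lt hki]

lemma two_mul_inverseMatrixTerm_zero (i j : ℕ) :
    2 * inverseMatrixTerm i j 0 = fwdDiffTerm i j j := by
  rcases Nat.eq_zero_or_pos i with rfl | hi
  · simp [inverseMatrixTerm, fwdDiffTerm, evenBinom_zero]
    ring
  · simp [inverseMatrixTerm, fwdDiffTerm, evenBinom_zero, hi.ne']

lemma inverseMatrixTerm_succ (i j k : ℕ) :
    inverseMatrixTerm i j (k + 1) = fwdDiffTerm i j (j + 1 + k) := by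
  rw [fwdDiffTerm, show ((j + 1 + k : ℕ) : ℤ) - j = ((k + 1 : ℕ) : ℤ) by push_cast; ring,
    Int.cast_mul, evenBinom_natCast i k.succ_pos, show j + 1 + k = k + 1 + j by ring,
    inverseMatrixTerm, if_neg (by omega)]
  push_cast
  ring

theorem inverse_matrix_identity (i j : ℕ) (hij : i ≤ j) :
    (∑ k ∈ Finset.Icc i j,
      (-1 : ℚ) ^ (j + k) * (if k + i = 0 then 1 else (2 * k : ℚ) / (k + i)) *
        Nat.choose (k + i) (2 * i) * Nat.choose (2 * j) (k + j)) =
    if i = j then 1 else 0 := by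
  change ∑ k ∈ Icc i j, inverseMatrixTerm i j k = _
  have hfold := congrArg (Int.cast : ℤ → ℚ) (sum_fwdDiffTerm hij)
  rw [sum_range_two_mul_add_one_of_palindrome _ j fun m hm ↦ fwdDiffTerm_reflect i hm] at hfold
  push_cast [nsmul_eq_mul, ← two_mul_inverseMatrixTerm_zero, ← inverseMatrixTerm_succ] at hfold
  rw [sum_Icc_inverseMatrixTerm]
  split_ifs at hfold ⊢ <;> linarith
end

section
/- Let q be a positive integer. For every i with 0 ≤ i ≤ q−1, Σ_{k=i}^{q−1} (−1)^{k+q+1} · (2k/(k+i)) · C(k+i, 2i) · C(2q, q−k) = (2q/(q+i)) · C(q+i, 2i), with the convention 2k/(k+i) = 1 when i = k = 0. -/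
open Finset

noncomputable def Dq (x : ℤ) (m : ℕ) : ℚ := (∏ t ∈ Finset.range m, ((x : ℚ) - t)) / m.factorial

lemma Dq_zero (x : ℤ) : Dq x 0 = 1 := by simp [Dq]

lemma Dq_natCast (n m : ℕ) : Dq (n : ℤ) m = n.choose m := by
  have h : (∏ t ∈ Finset.range m, ((n : ℚ) - t)) = (n.descFactorial m : ℚ) := by
    rcases le_or_gt m n with h | h
    · rw [Nat.descFactorial_eq_prod_range, Nat.cast_prod]
      exact Finset.prod_congr rfl fun t ht => by
        have : t ≤ n := le_trans (le_of_lt (Finset.mem_range.mp ht)) h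
        push_cast [Nat.cast_sub this]; ring
    · rw [Finset.prod_eq_zero (Finset.mem_range.mpr h) (by push_cast; ring)]
      rw [Nat.descFactorial_eq_zero_iff_lt.mpr h, Nat.cast_zero]
  rw [Dq]; push_cast [h, Nat.descFactorial_eq_factorial_mul_choose]
  field_simp
lemma Dq_reflect (x : ℤ) (m : ℕ) : Dq x m = (-1) ^ m * Dq (m - 1 - x) m := by
  unfold Dq
  rw [← mul_div_assoc]
  congr 1
  rw [← Finset.prod_range_reflect (fun t => ((x:ℚ) - t)) m]
  have hcard : ((-1 : ℚ)) ^ m = ∏ _j ∈ Finset.range m, (-1 : ℚ) := by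
    rw [Finset.prod_const, Finset.card_range]
  rw [hcard, ← Finset.prod_mul_distrib]
  refine Finset.prod_congr rfl fun j hj => ?_
  have hj' := Finset.mem_range.mp hj
  have h1 : ((m - 1 - j : ℕ) : ℚ) = (m : ℚ) - 1 - j := by
    have : ((m - 1 - j : ℕ) : ℤ) = (m : ℤ) - 1 - j := by omega
    exact_mod_cast congrArg (fun z : ℤ => (z : ℚ)) this
  simp only [h1]
  push_cast
  ring

lemma Dq_pascal (x : ℤ) (m : ℕ) : Dq x (m+1) - Dq (x-1) (m+1) = Dq (x-1) m := by
  unfold Dq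
  have h1 : (∏ t ∈ Finset.range (m+1), ((x:ℚ) - t)) =
      (x:ℚ) * ∏ t ∈ Finset.range m, (((x - 1 : ℤ):ℚ) - t) := by
    rw [Finset.prod_range_succ' (fun t => ((x:ℚ) - t)) m]
    have e : (∏ t ∈ Finset.range m, ((x:ℚ) - ((t:ℕ)+1 : ℕ))) =
        ∏ t ∈ Finset.range m, (((x-1:ℤ):ℚ) - t) :=
      Finset.prod_congr rfl fun t _ => by push_cast; ring
    rw [e]
    push_cast
    ring
  have h2 : (∏ t ∈ Finset.range (m+1), (((x-1:ℤ):ℚ) - t)) =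
      (∏ t ∈ Finset.range m, (((x - 1 : ℤ):ℚ) - t)) * (((x:ℚ) - 1) - m) := by
    rw [Finset.prod_range_succ]; push_cast; ring
  rw [h1, h2, Nat.factorial_succ]
  have hm : (m.factorial : ℚ) ≠ 0 := Nat.cast_ne_zero.mpr m.factorial_ne_zero
  have hm1 : ((m:ℚ) + 1) ≠ 0 := by positivity
  push_cast
  field_simp
  ring
lemma alt_step (N : ℕ) (f : ℕ → ℚ) :
    ∑ j ∈ range (N+2), (-1:ℚ)^j * ((N+1).choose j) * f j
      = ∑ j ∈ range (N+1), (-1:ℚ)^j * (N.choose j) * (f j - f (j+1)) := by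
  rw [Finset.sum_range_succ' (fun j => (-1:ℚ)^j * ((N+1).choose j) * f j) (N+1)]
  have e1 : ∀ j ∈ range (N+1), (-1:ℚ)^(j+1) * ((N+1).choose (j+1)) * f (j+1)
      = -((-1:ℚ)^j * (N.choose j) * f (j+1)) + (-1:ℚ)^(j+1) * (N.choose (j+1)) * f (j+1) := by
    intro j _; rw [Nat.choose_succ_succ]; push_cast; ring
  rw [Finset.sum_congr rfl e1, Finset.sum_add_distrib, Finset.sum_neg_distrib]
  have e2 : ∑ j ∈ range (N+1), (-1:ℚ)^(j+1) * (N.choose (j+1)) * f (j+1)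
      = (∑ j ∈ range (N+2), (-1:ℚ)^j * (N.choose j) * f j) - f 0 := by
    rw [Finset.sum_range_succ' (fun j => (-1:ℚ)^j * (N.choose j) * f j) (N+1)]
    simp
  have e3 : ∑ j ∈ range (N+2), (-1:ℚ)^j * (N.choose j) * f j
      = ∑ j ∈ range (N+1), (-1:ℚ)^j * (N.choose j) * f j := by
    rw [Finset.sum_range_succ]; simp
  have e4 : ∑ j ∈ range (N+1), (-1:ℚ)^j * (N.choose j) * (f j - f (j+1))
      = (∑ j ∈ range (N+1), (-1:ℚ)^j * (N.choose j) * f j)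
        - ∑ j ∈ range (N+1), (-1:ℚ)^j * (N.choose j) * f (j+1) := by
    rw [← Finset.sum_sub_distrib]; exact Finset.sum_congr rfl fun j _ => by ring
  rw [e2, e3, e4]
  simp
  ring

lemma alt_vanish : ∀ (N : ℕ), ∀ (d : ℕ) (c : ℤ), d < N →
    ∑ j ∈ range (N+1), (-1:ℚ)^j * (N.choose j) * Dq (c - j) d = 0 := by
  intro N
  induction N with
  | zero => intro d c hd; omega
  | succ N ih =>
    intro d c hd
    rw [show N + 1 + 1 = N + 2 from rfl,
      alt_step N (fun j => Dq (c - j) d)]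
    rcases d with _ | d
    · simp [Dq_zero]
    · have e : ∀ j ∈ range (N+1), (-1:ℚ)^j * (N.choose j) * (Dq (c - j) (d+1) - Dq (c - (j+1:ℕ)) (d+1))
          = (-1:ℚ)^j * (N.choose j) * Dq ((c-1) - j) d := by
        intro j _
        congr 1
        have h := Dq_pascal (c - j) d
        rw [show c - ((j:ℕ)+1:ℕ) = (c - j) - 1 by push_cast; ring,
          show (c-1) - (j:ℤ) = (c - j) - 1 by ring] at *
        exact h
      rw [Finset.sum_congr rfl e]
      exact ih d (c-1) (by omega)
lemma Dq_refl_nat (i k : ℕ) (hk : 1 ≤ k) :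
    Dq ((i:ℤ) - k) (2*i) = ((k + i - 1).choose (2*i) : ℚ) := by
  rw [Dq_reflect, pow_mul]
  norm_num
  rw [show 2*(i:ℤ) - 1 - ((i:ℤ) - k) = ((k + i - 1 : ℕ) : ℤ) by push_cast; omega]
  exact Dq_natCast _ _

lemma nat_key (i k : ℕ) (hik : i ≤ k) (hk : 1 ≤ k) :
    (k+i) * Nat.choose (k+i-1) (2*i) = Nat.choose (k+i) (2*i) * (k-i) := by
  have hs : k + i - 1 + 1 = k + i := by omega
  calc (k+i) * Nat.choose (k+i-1) (2*i)
      = (k+i-1+1) * Nat.choose (k+i-1) (2*i) := by rw [hs]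
    _ = Nat.choose (k+i-1+1) (2*i+1) * (2*i+1) := Nat.add_one_mul_choose_eq _ _
    _ = Nat.choose (k+i) (2*i+1) * (2*i+1) := by rw [hs]
    _ = Nat.choose (k+i) (2*i) * (k+i - 2*i) := Nat.choose_succ_right_eq _ _
    _ = Nat.choose (k+i) (2*i) * (k-i) := by congr 1; omega
lemma pointwise (q i k : ℕ) (hq : 1 ≤ q) (hik : i ≤ k) :
    ((if k + i = 0 then (1:ℚ) else (2 * k : ℚ) / (k + i)) * Nat.choose (k + i) (2 * i))
      = Dq ((k:ℤ) + i) (2*i) + (if k = 0 then 0 else Dq ((i:ℤ) - k) (2*i)) := by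
  rcases Nat.eq_zero_or_pos k with hk | hk
  · subst hk
    have hi : i = 0 := le_antisymm hik (Nat.zero_le _)
    subst hi
    simp [Dq_zero]
  · have hk1 : 1 ≤ k := hk
    have hki : k + i ≠ 0 := by omega
    rw [if_neg hki, if_neg (by omega : ¬ k = 0), Dq_refl_nat i k hk1,
      show (k:ℤ) + i = ((k+i : ℕ) : ℤ) by push_cast; ring, Dq_natCast]
    have hne : ((k:ℚ) + i) ≠ 0 := by
      have : (0:ℚ) < k := by exact_mod_cast hk
      positivity
    have hkey : ((k:ℚ)+i) * ((k+i-1).choose (2*i) : ℚ) = ((k+i).choose (2*i) : ℚ) * ((k:ℚ) - i) := by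
      have := nat_key i k hik hk1
      have hcast : ((k - i : ℕ) : ℚ) = (k:ℚ) - i := by
        push_cast [Nat.cast_sub hik]; ring
      calc ((k:ℚ)+i) * ((k+i-1).choose (2*i) : ℚ)
          = (((k+i) * Nat.choose (k+i-1) (2*i) : ℕ) : ℚ) := by push_cast; ring
        _ = ((Nat.choose (k+i) (2*i) * (k-i) : ℕ) : ℚ) := by rw [this]
        _ = ((k+i).choose (2*i) : ℚ) * ((k:ℚ) - i) := by push_cast [Nat.cast_sub hik]; ring
    rw [div_mul_eq_mul_div, div_eq_iff hne]
    linear_combination -hkey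
theorem alpha_even_identity (q : ℕ) (hq : 1 ≤ q) (i : ℕ) (hi : i ≤ q - 1) :
    (∑ k ∈ Finset.Icc i (q - 1),
      (-1 : ℚ) ^ (k + q + 1) * (if k + i = 0 then 1 else (2 * k : ℚ) / (k + i)) *
        Nat.choose (k + i) (2 * i) * Nat.choose (2 * q) (q - k)) =
    (2 * q : ℚ) / (q + i) * Nat.choose (q + i) (2 * i) := by
  have hiq : i < q := by omega
  have key : ∑ k ∈ Finset.Icc i q,
      (-1 : ℚ) ^ (k + q + 1) * (if k + i = 0 then 1 else (2 * k : ℚ) / (k + i)) *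
        Nat.choose (k + i) (2 * i) * Nat.choose (2 * q) (q - k) = 0 := by
    have step1 : ∀ k ∈ Finset.Icc i q,
        (-1 : ℚ) ^ (k + q + 1) * (if k + i = 0 then 1 else (2 * k : ℚ) / (k + i)) *
          Nat.choose (k + i) (2 * i) * Nat.choose (2 * q) (q - k)
        = (-1 : ℚ) ^ (k + q + 1) * Dq ((k:ℤ)+i) (2*i) * Nat.choose (2 * q) (q - k)
          + (-1 : ℚ) ^ (k + q + 1) * (if k = 0 then (0:ℚ) else Dq ((i:ℤ) - k) (2*i)) *
              Nat.choose (2 * q) (q - k) := by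
      intro k hk
      have hik : i ≤ k := (Finset.mem_Icc.mp hk).1
      have h := pointwise q i k hq hik
      linear_combination ((-1:ℚ)^(k+q+1) * (Nat.choose (2*q) (q-k) : ℚ)) * h
    rw [Finset.sum_congr rfl step1, Finset.sum_add_distrib]
    -- U1 extension
    have hsub1 : Finset.Icc i q ⊆ Finset.range (q+1) := by
      intro k hk; rw [Finset.mem_Icc] at hk; rw [Finset.mem_range]; omega
    have U1ext : ∑ k ∈ Finset.Icc i q,
        (-1 : ℚ) ^ (k + q + 1) * Dq ((k:ℤ)+i) (2*i) * Nat.choose (2 * q) (q - k)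
        = ∑ k ∈ Finset.range (q+1),
        (-1 : ℚ) ^ (k + q + 1) * Dq ((k:ℤ)+i) (2*i) * Nat.choose (2 * q) (q - k) := by
      apply Finset.sum_subset hsub1
      intro k hk hk'
      rw [Finset.mem_range] at hk
      rw [Finset.mem_Icc] at hk'
      have hki : k < i := by omega
      have hz : Dq ((k:ℤ)+i) (2*i) = 0 := by
        rw [show (k:ℤ)+i = ((k+i:ℕ):ℤ) by push_cast; ring, Dq_natCast,
          Nat.choose_eq_zero_of_lt (by omega)]
        norm_num
      rw [hz]; ring
    -- U2 extension to Icc 0 q then restriction to Icc 1 q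
    have U2a : ∑ k ∈ Finset.Icc i q,
        (-1 : ℚ) ^ (k + q + 1) * (if k = 0 then (0:ℚ) else Dq ((i:ℤ) - k) (2*i)) *
          Nat.choose (2 * q) (q - k)
        = ∑ k ∈ Finset.Icc 0 q,
        (-1 : ℚ) ^ (k + q + 1) * (if k = 0 then (0:ℚ) else Dq ((i:ℤ) - k) (2*i)) *
          Nat.choose (2 * q) (q - k) := by
      apply Finset.sum_subset
      · intro k hk; rw [Finset.mem_Icc] at *; omega
      · intro k hk hk'
        rw [Finset.mem_Icc] at hk hk'
        have hki : k < i := by omega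
        rcases Nat.eq_zero_or_pos k with h0 | h0
        · rw [h0]; norm_num
        · rw [if_neg (by omega : ¬ k = 0), Dq_refl_nat i k h0,
            Nat.choose_eq_zero_of_lt (by omega)]
          norm_num
    have U2b : ∑ k ∈ Finset.Icc 0 q,
        (-1 : ℚ) ^ (k + q + 1) * (if k = 0 then (0:ℚ) else Dq ((i:ℤ) - k) (2*i)) *
          Nat.choose (2 * q) (q - k)
        = ∑ k ∈ Finset.Icc 1 q,
        (-1 : ℚ) ^ (k + q + 1) * Dq ((i:ℤ) - k) (2*i) * Nat.choose (2 * q) (q - k) := by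
      rw [show Finset.Icc 0 q = insert 0 (Finset.Icc 1 q) by
        ext x; simp [Finset.mem_Icc, Finset.mem_insert]; omega]
      rw [Finset.sum_insert (by simp)]
      norm_num
      exact Finset.sum_congr rfl fun k hk => by
        rw [Finset.mem_Icc] at hk
        rw [if_neg (by omega : ¬ k = 0)]
    rw [U1ext, U2a, U2b]
    -- Now use alt_vanish
    have VS := alt_vanish (2*q) (2*i) ((q:ℤ)+i) (by omega)
    rw [Finset.range_eq_Ico,
      ← Finset.sum_Ico_consecutive _ (by omega : 0 ≤ q+1) (by omega : q+1 ≤ 2*q+1)] at VS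
    -- part1
    have part1 : ∑ j ∈ Finset.Ico 0 (q+1), (-1:ℚ)^j * ((2*q).choose j) * Dq ((q:ℤ)+i - j) (2*i)
        = - ∑ k ∈ Finset.range (q+1),
          (-1 : ℚ) ^ (k + q + 1) * Dq ((k:ℤ)+i) (2*i) * Nat.choose (2 * q) (q - k) := by
      rw [← Finset.range_eq_Ico,
        ← Finset.sum_range_reflect (fun j => (-1:ℚ)^j * ((2*q).choose j) * Dq ((q:ℤ)+i - j) (2*i)) (q+1),
        ← Finset.sum_neg_distrib]
      refine Finset.sum_congr rfl fun k hk => ?_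
      rw [Finset.mem_range] at hk
      have hkq : k ≤ q := by omega
      have e1 : q + 1 - 1 - k = q - k := by omega
      rw [e1]
      have e2 : ((q:ℤ)+i - ((q - k : ℕ):ℤ)) = ((k:ℤ)+i) := by omega
      rw [e2]
      have e3 : (-1:ℚ)^(q-k) = -(-1:ℚ)^(k+q+1) := by
        rw [show k+q+1 = (q-k) + (2*k+1) by omega, pow_add]
        rw [show (-1:ℚ)^(2*k+1) = -1 by
          rw [pow_succ, pow_mul]; norm_num]
        ring
      rw [e3]; ring
    -- part2
    have part2 : ∑ j ∈ Finset.Ico (q+1) (2*q+1), (-1:ℚ)^j * ((2*q).choose j) * Dq ((q:ℤ)+i - j) (2*i)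
        = - ∑ k ∈ Finset.Icc 1 q,
          (-1 : ℚ) ^ (k + q + 1) * Dq ((i:ℤ) - k) (2*i) * Nat.choose (2 * q) (q - k) := by
      rw [Finset.sum_Ico_eq_sum_range]
      rw [show 2*q+1 - (q+1) = q by omega]
      rw [show Finset.Icc 1 q = Finset.Ico 1 (q+1) from (Finset.Ico_add_one_right_eq_Icc 1 q).symm,
        Finset.sum_Ico_eq_sum_range, show q + 1 - 1 = q by omega, ← Finset.sum_neg_distrib]
      refine Finset.sum_congr rfl fun t ht => ?_
      rw [Finset.mem_range] at ht
      have e1 : (-1:ℚ)^(q+1+t) = -(-1:ℚ)^((1+t)+q+1) := by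
        rw [show (1+t)+q+1 = (q+1+t) + 1 by omega, pow_succ]; ring
      have e2 : (2*q).choose (q+1+t) = (2*q).choose (q - (1+t)) := by
        rw [show q - (1+t) = 2*q - (q+1+t) by omega]
        exact (Nat.choose_symm (by omega)).symm
      have e3 : ((q:ℤ)+i - ((q+1+t:ℕ):ℤ)) = ((i:ℤ) - ((1+t:ℕ):ℤ)) := by push_cast; ring
      rw [e1, e2, e3]; ring
    rw [part1, part2] at VS
    linarith [VS]
  -- conclude from key
  have hsplit := Finset.sum_Icc_succ_top (show i ≤ (q-1)+1 by omega)
    (fun k => (-1 : ℚ) ^ (k + q + 1) * (if k + i = 0 then 1 else (2 * k : ℚ) / (k + i)) *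
        Nat.choose (k + i) (2 * i) * Nat.choose (2 * q) (q - k))
  rw [show q - 1 + 1 = q by omega] at hsplit
  rw [hsplit] at key
  have hTq : (-1 : ℚ) ^ (q + q + 1) * (if q + i = 0 then 1 else (2 * q : ℚ) / (q + i)) *
        Nat.choose (q + i) (2 * i) * Nat.choose (2 * q) (q - q)
      = -((2 * q : ℚ) / (q + i) * Nat.choose (q + i) (2 * i)) := by
    rw [Nat.sub_self, Nat.choose_zero_right, if_neg (by omega : ¬ q + i = 0)]
    rw [show (-1:ℚ)^(q+q+1) = -1 by
      rw [show q+q+1 = 2*q+1 by omega, pow_succ, pow_mul]; norm_num]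
    push_cast; ring
  rw [hTq] at key
  linarith [key]
end
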